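/- arXiv:2310.13067 — 2 statements merged into one kernel-verified Lean document; each statement's English description precedes it below -/
import Mathlib

section
/- Let u be an upcycle for A^n with diamondicity d. Select an n-periodic subset of the diamonds of u, with δ selected diamonds per window. Let w be obtained from u^(a^δ) by replacing all copies of the selected diamonds, in order, with the characters of a cyclic total word v. Then w is an upcycle for A^n if and only if v is an (a, δ, δ·a^{n−d}/n)-perfect necklace; and in that case w has diamondicity d − δ. -/
/-- The window of length `n` of the cyclic partial word `u` starting at position `i`
covers the total word `w`. -/
def Covers (a n : ℕ) (u : ℕ → Option (Fin a)) (i : ℕ) (w : Fin n → Fin a) : Prop :=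
  ∀ j : Fin n, u (i + (j : ℕ)) = none ∨ u (i + (j : ℕ)) = some (w j)

/-- `u`, viewed as a cyclic partial word of length `N`, is a universal partial cycle
for `(Fin a)^n`. -/
def IsUpcycle (a n N : ℕ) (u : ℕ → Option (Fin a)) : Prop :=
  (∀ i, u (i + N) = u i) ∧ ∀ w : Fin n → Fin a, ∃! i : Fin N, Covers a n u (i : ℕ) w

/-- `v`, viewed as a cyclic word of length `t * a ^ n`, is an `(a, n, t)`-perfect
necklace. -/
def IsPerfectNecklace (a n t : ℕ) (v : ℕ → Fin a) : Prop :=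
  (∀ i, v (i + t * a ^ n) = v i) ∧
  ∀ j : Fin t, ∀ w : Fin n → Fin a,
    ∃! i : Fin (t * a ^ n), (i : ℕ) % t = (j : ℕ) ∧
      ∀ m : Fin n, v ((i : ℕ) + (m : ℕ)) = w m

/-!
Write `L = a ^ (n - d)` for the length of `u` and `t` for the number of selected diamonds in
one period of `u`; counting the selected positions in `[0, nL)` in two ways gives `n t = L δ`.
For a word `x`, let `i < L` be the unique position at which `u` covers `x`. The filled word can
cover `x` only at positions `i + k L` with `k < a ^ δ`, and because the selected positions of a
window are numbered consecutively, it covers `x` at `i + k L` exactly when `v`, read from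
`c + k t` (`c` being the number of selected positions before `i`), spells the letters `y` that
`x` puts on the selected positions. As `x` varies, `y` is arbitrary and `c` takes every residue
modulo `t`, so unique covering by the filled word is the same as every `y` occurring exactly
once in every residue class of starting positions modulo `t`.
-/

open Function Finset

namespace Nat

variable {p : ℕ → Prop} [DecidablePred p]

theorem count_add_of_periodic {L : ℕ} (hp : Periodic p L) (i : ℕ) :
    count p (i + L) = count p i + count p L := by
  have hshift : (fun k => p (L + k)) = p := funext fun k => by rw [add_comm]; exact hp k
  rw [add_comm i, count_add]
  simp only [hshift]
  ring

theorem count_add_mul_of_periodic {L : ℕ} (hp : Periodic p L) (i k : ℕ) :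
    count p (i + k * L) = count p i + k * count p L := by
  induction k with
  | zero => simp
  | succ k ih => rw [add_mul, one_mul, ← add_assoc, count_add_of_periodic hp, ih]; ring

theorem exists_count_eq {b e m : ℕ} (hb : count p b ≤ m) (he : m < count p e) :
    ∃ k, b ≤ k ∧ k < e ∧ p k ∧ count p k = m := by
  have hm : ∀ hf : (Set.ofPred p).Finite, m < #hf.toFinset :=
    fun hf => he.trans_le (count_le_card hf e)
  refine ⟨nth p m, ?_, lt_of_count_lt_count (by rwa [count_nth hm]), nth_mem m hm, count_nth hm⟩
  by_contra! h
  have := count_strict_mono (nth_mem m hm) h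
  rw [count_nth hm] at this
  omega

end Nat

theorem existsUnique_fin_mul_iff {L K r : ℕ} (hr : r < L) (P : ℕ → Prop) :
    (∃! i : Fin (L * K), (i : ℕ) % L = r ∧ P i) ↔ ∃! k : Fin K, P (r + k * L) := by
  have hval : ∀ k : Fin K, r + k * L < L * K := fun k => by nlinarith [k.2]
  have hmod : ∀ k : ℕ, (r + k * L) % L = r := fun k => by
    rw [Nat.add_mul_mod_self_right, Nat.mod_eq_of_lt hr]
  have hdiv : ∀ k : ℕ, (r + k * L) / L = k := fun k => by
    rw [Nat.add_mul_div_right _ _ (by omega), Nat.div_eq_of_lt hr, zero_add]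
  have hdecomp : ∀ i : ℕ, i % L = r → r + i / L * L = i := fun i hi => by
    rw [← hi]; exact Nat.mod_add_div' i L
  constructor
  · rintro ⟨i, ⟨hi, hPi⟩, huniq⟩
    refine ⟨⟨i / L, Nat.div_lt_of_lt_mul i.2⟩, show P (r + i / L * L) by rwa [hdecomp i hi],
      fun k hk => Fin.ext ?_⟩
    have := congrArg Fin.val (huniq ⟨r + k * L, hval k⟩ ⟨hmod k, hk⟩)
    simp only at this ⊢
    rw [← this, hdiv]
  · rintro ⟨k, hk, huniq⟩
    refine ⟨⟨r + k * L, hval k⟩, ⟨hmod k, hk⟩, fun i ⟨hi, hPi⟩ => Fin.ext ?_⟩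
    have := congrArg Fin.val
      (huniq ⟨i / L, Nat.div_lt_of_lt_mul i.2⟩ (show P (r + i / L * L) by rwa [hdecomp i hi]))
    simp only at this ⊢
    rw [← this, hdecomp i hi]

theorem existsUnique_fin_add_iff {K : ℕ} [NeZero K] {Q : ℕ → Prop} (hQ : Periodic Q K)
    (e : ℕ) : (∃! k : Fin K, Q (k + e)) ↔ ∃! k : Fin K, Q k :=
  (Equiv.addRight (Fin.ofNat K e)).existsUnique_congr fun k => by
    rw [← hQ.map_mod_nat]
    simp [Fin.val_add]

section Window

open Nat

variable {a n δ : ℕ} {S : ℕ → Prop} [DecidablePred S]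

theorem count_mul_of_window (hwin : ∀ i, count S (i + n) = count S i + δ) (k : ℕ) :
    count S (k * n) = k * δ := by
  induction k with
  | zero => simp
  | succ k ih => rw [add_mul, one_mul, hwin, ih, add_mul, one_mul]

theorem count_lt_of_window (hwin : ∀ i, count S (i + n) = count S i + δ) {i j : ℕ}
    (hj : j < n) (hS : S (i + j)) : count S (i + j) < count S i + δ := by
  rw [← hwin]
  exact count_strict_mono hS (by omega)

theorem exists_window_count_eq (hwin : ∀ i, count S (i + n) = count S i + δ) (i : ℕ)
    {m : ℕ} (hm : m < δ) : ∃ j < n, S (i + j) ∧ count S (i + j) = count S i + m := by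
  obtain ⟨k, hik, hkn, hSk, hk⟩ :=
    exists_count_eq (p := S) (b := i) (e := i + n) (m := count S i + m) (by omega)
      (by rw [hwin]; omega)
  exact ⟨k - i, by omega, by rwa [Nat.add_sub_cancel' hik], by rw [Nat.add_sub_cancel' hik, hk]⟩

theorem exists_count_eq_of_window (hwin : ∀ i, count S (i + n) = count S i + δ)
    (hδ : 0 < δ) (m : ℕ) : ∃ p, S p ∧ count S p = m := by
  obtain ⟨p, -, -, hSp, hp⟩ := exists_count_eq (p := S) (b := 0) (e := (m + 1) * n) (m := m)
    (by simp) (by rw [count_mul_of_window hwin]; nlinarith)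
  exact ⟨p, hSp, hp⟩

theorem mul_count_eq_of_periodic {L : ℕ} (hS : Periodic S L)
    (hwin : ∀ i, count S (i + n) = count S i + δ) : n * count S L = L * δ := by
  rw [← count_mul_of_window hwin L, ← zero_add (L * n), mul_comm L n,
    count_add_mul_of_periodic hS, count_zero, zero_add]

/-- `y` lists, in order, the letters that `x` puts on the selected positions of the window
of length `n` starting at `i`. -/
def AgreeOnSelected {α : Type*} (S : ℕ → Prop) [DecidablePred S] (i : ℕ) (x : Fin n → α)
    (y : Fin δ → α) : Prop :=
  ∀ (j : Fin n) (m : Fin δ), S (i + j) → count S (i + j) = count S i + m → x j = y m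

theorem forall_selected_iff {α : Type*} (hwin : ∀ i, count S (i + n) = count S i + δ) {i : ℕ}
    {x : Fin n → α} {y : Fin δ → α} (hxy : AgreeOnSelected S i x y) (f : ℕ → α) :
    (∀ j : Fin n, S (i + j) → f (count S (i + j)) = x j) ↔
      ∀ m : Fin δ, f (count S i + m) = y m := by
  constructor
  · intro h m
    obtain ⟨j, hj, hSj, hcount⟩ := exists_window_count_eq hwin i m.2
    rw [← hcount, h ⟨j, hj⟩ hSj, hxy ⟨j, hj⟩ m hSj hcount]
  · intro h j hSj
    have hlt := count_lt_of_window hwin j.2 hSj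
    have hle : count S i ≤ count S (i + j) := count_monotone S (by omega)
    have hcount : count S (i + j) = count S i + (count S (i + j) - count S i) := by omega
    rw [hxy j ⟨_, by omega⟩ hSj hcount, ← h]
    exact congrArg f hcount

theorem exists_agreeOnSelected {α : Type*} (hwin : ∀ i, count S (i + n) = count S i + δ)
    (i : ℕ) (x : Fin n → α) : ∃ y : Fin δ → α, AgreeOnSelected S i x y := by
  choose j hj hSj hcount using fun m : Fin δ => exists_window_count_eq hwin i m.2
  refine ⟨fun m => x ⟨j m, hj m⟩, fun j' m hSj' hc => congrArg x (Fin.ext ?_)⟩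
  have := count_injective hSj' (hSj m) (by rw [hc, hcount])
  simp only
  omega

theorem exists_covers_agreeOnSelected (ha : 0 < a) {u : ℕ → Option (Fin a)}
    (hwin : ∀ i, count S (i + n) = count S i + δ) (hSdiam : ∀ i, S i → u i = none) (i : ℕ)
    (y : Fin δ → Fin a) : ∃ x, Covers a n u i x ∧ AgreeOnSelected S i x y := by
  have hlt : ∀ j : Fin n, S (i + j) → count S (i + j) - count S i < δ := fun j hj => by
    have := count_lt_of_window hwin j.2 hj
    have := count_monotone S (Nat.le_add_right i j)
    omega
  refine ⟨fun j => if h : S (i + j) then y ⟨_, hlt j h⟩ else (u (i + j)).getD ⟨0, ha⟩,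
    fun j => ?_, fun j m hSj hc => ?_⟩
  · by_cases h : S (i + j)
    · exact Or.inl (hSdiam _ h)
    · cases hu : u (i + j) <;> simp [h, hu]
  · simp only [dif_pos hSj]
    congr
    omega

end Window

section Fill

open Nat

variable {a n δ L : ℕ} {S : ℕ → Prop} [DecidablePred S] {u : ℕ → Option (Fin a)}
  {v : ℕ → Fin a}

/-- Selected positions are numbered from `0`: the `k`-th one receives the letter `v k`. -/
def fillSelected (S : ℕ → Prop) [DecidablePred S] (u : ℕ → Option (Fin a)) (v : ℕ → Fin a) :
    ℕ → Option (Fin a) :=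
  fun i => if S i then some (v (count S i)) else u i

theorem covers_add_mul_iff (hu : Periodic u L) (i k : ℕ) (x : Fin n → Fin a) :
    Covers a n u (i + k * L) x ↔ Covers a n u i x := by
  have hk : ∀ j, u (j + k * L) = u j := hu.nat_mul k
  simp only [Covers, add_right_comm i, hk]

theorem covers_mod_iff (hu : Periodic u L) (i : ℕ) (x : Fin n → Fin a) :
    Covers a n u (i % L) x ↔ Covers a n u i x := by
  rw [← covers_add_mul_iff hu (i % L) (i / L), Nat.mod_add_div']

theorem covers_fillSelected_iff (hSdiam : ∀ i, S i → u i = none) (i : ℕ) (x : Fin n → Fin a) :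
    Covers a n (fillSelected S u v) i x ↔
      Covers a n u i x ∧ ∀ j : Fin n, S (i + j) → v (count S (i + j)) = x j := by
  simp only [Covers, fillSelected, ← forall_and]
  refine forall_congr' fun j => ?_
  by_cases h : S (i + j)
  · simp [h, hSdiam _ h]
  · simp [h]

theorem covers_fillSelected_add_mul_iff (hu : Periodic u L) (hS : Periodic S L)
    (hSdiam : ∀ i, S i → u i = none) (hwin : ∀ i, count S (i + n) = count S i + δ) {i : ℕ}
    {x : Fin n → Fin a} {y : Fin δ → Fin a} (hcov : Covers a n u i x)
    (hxy : AgreeOnSelected S i x y) (k : ℕ) :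
    Covers a n (fillSelected S u v) (i + k * L) x ↔
      ∀ m : Fin δ, v (count S i + k * count S L + m) = y m := by
  rw [covers_fillSelected_iff hSdiam, and_iff_right ((covers_add_mul_iff hu i k x).2 hcov)]
  have hSk : ∀ j, S (j + k * L) = S j := hS.nat_mul k
  simp only [add_right_comm i, hSk, count_add_mul_of_periodic hS]
  simpa only [add_right_comm _ (k * count S L)] using
    forall_selected_iff hwin hxy fun c => v (c + k * count S L)

theorem existsUnique_covers_fillSelected_iff (hu : IsUpcycle a n L u)
    (hSdiam : ∀ i, S i → u i = none) {i : ℕ} {x : Fin n → Fin a} (hiL : i < L)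
    (hcov : Covers a n u i x) (K : ℕ) :
    (∃! j : Fin (L * K), Covers a n (fillSelected S u v) j x) ↔
      ∃! k : Fin K, Covers a n (fillSelected S u v) (i + k * L) x := by
  refine Iff.trans ?_ (existsUnique_fin_mul_iff hiL (Covers a n (fillSelected S u v) · x))
  refine existsUnique_congr fun j => (and_iff_right_of_imp fun hj => ?_).symm
  have hjcov := (covers_mod_iff hu.1 j x).2 ((covers_fillSelected_iff hSdiam j x).1 hj).1
  exact congrArg Fin.val ((hu.2 x).unique (y₁ := ⟨j % L, Nat.mod_lt _ (by omega)⟩) hjcov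
    (y₂ := ⟨i, hiL⟩) hcov)

theorem periodic_fillSelected_iff (hu : Periodic u L) (hS : Periodic S L)
    (hwin : ∀ i, count S (i + n) = count S i + δ) (hδ : 0 < δ) (K : ℕ) :
    Periodic (fillSelected S u v) (L * K) ↔ Periodic v (count S L * K) := by
  have hshift : ∀ i, fillSelected S u v (i + L * K) =
      if S i then some (v (count S i + count S L * K)) else u i := fun i => by
    have hSK : ∀ j, S (j + K * L) = S j := hS.nat_mul K
    have huK : ∀ j, u (j + K * L) = u j := hu.nat_mul K
    rw [fillSelected, mul_comm L K, huK, count_add_mul_of_periodic hS,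
      mul_comm K (count S L)]
    simp only [hSK]
  constructor
  · intro h c
    obtain ⟨p, hSp, rfl⟩ := exists_count_eq_of_window hwin hδ c
    have hp := h p
    rwa [hshift, fillSelected, if_pos hSp, if_pos hSp, Option.some_inj] at hp
  · intro hv i
    rw [hshift, fillSelected, hv (count S i)]

theorem card_fillSelected_eq_none (hSdiam : ∀ i, S i → u i = none) (i : ℕ) :
    #{j ∈ range n | fillSelected S u v (i + j) = none} =
      #{j ∈ range n | u (i + j) = none} - #{j ∈ range n | S (i + j)} := by
  have hnone : ∀ j, fillSelected S u v (i + j) = none ↔ u (i + j) = none ∧ ¬ S (i + j) :=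
    fun j => by unfold fillSelected; split_ifs with h <;> simp [h]
  rw [filter_congr fun j _ => hnone j, filter_and_not,
    card_sdiff_of_subset fun j => ?_]
  simp only [mem_filter]
  exact fun ⟨hj, hS⟩ => ⟨hj, hSdiam _ hS⟩

end Fill

section Necklace

variable {a δ t : ℕ} {v : ℕ → Fin a}

theorem isPerfectNecklace_zero (a n : ℕ) (v : ℕ → Fin a) : IsPerfectNecklace a n 0 v :=
  ⟨fun i => by simp, fun j => j.elim0⟩

theorem isPerfectNecklace_iff :
    IsPerfectNecklace a δ t v ↔ Periodic v (t * a ^ δ) ∧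
      ∀ r < t, ∀ y : Fin δ → Fin a,
        ∃! k : Fin (a ^ δ), ∀ m : Fin δ, v (r + k * t + m) = y m :=
  and_congr Iff.rfl
    ⟨fun h r hr y => (existsUnique_fin_mul_iff hr fun i => ∀ m : Fin δ, v (i + m) = y m).1
        (h ⟨r, hr⟩ y),
      fun h r y => (existsUnique_fin_mul_iff r.2 fun i => ∀ m : Fin δ, v (i + m) = y m).2
        (h r r.2 y)⟩

theorem IsPerfectNecklace.existsUnique_window (hv : IsPerfectNecklace a δ t v) (ha : 0 < a)
    (ht : 0 < t) (c : ℕ) (y : Fin δ → Fin a) :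
    ∃! k : Fin (a ^ δ), ∀ m : Fin δ, v (c + k * t + m) = y m := by
  rw [isPerfectNecklace_iff] at hv
  have : NeZero (a ^ δ) := ⟨(pow_pos ha δ).ne'⟩
  have hvK : ∀ j, v (j + t * a ^ δ) = v j := hv.1
  have hQ : Periodic (fun k => ∀ m : Fin δ, v (c % t + k * t + m) = y m) (a ^ δ) := fun k => by
    simp only [show ∀ m : ℕ, c % t + (k + a ^ δ) * t + m = c % t + k * t + m + t * a ^ δ by
      intro m; ring, hvK]
  refine (existsUnique_congr fun k => ?_).1
    ((existsUnique_fin_add_iff hQ (c / t)).2 (hv.2 _ (Nat.mod_lt c ht) y))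
  rw [add_mul, ← add_assoc, add_right_comm, Nat.mod_add_div']

end Necklace

open Nat in
theorem isUpcycle_fillSelected_iff {a n δ L : ℕ} {S : ℕ → Prop} [DecidablePred S]
    {u : ℕ → Option (Fin a)} {v : ℕ → Fin a} (ha : 0 < a) (hu : IsUpcycle a n L u)
    (hS : Periodic S L) (hSdiam : ∀ i, S i → u i = none)
    (hwin : ∀ i, count S (i + n) = count S i + δ) (hδ : 0 < δ) :
    IsUpcycle a n (L * a ^ δ) (fillSelected S u v) ↔ IsPerfectNecklace a δ (count S L) v := by
  obtain ⟨i₀, -⟩ := hu.2 fun _ => ⟨0, ha⟩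
  have ht : 0 < count S L := by
    have := mul_count_eq_of_periodic hS hwin
    exact Nat.pos_of_mul_pos_left (this ▸ Nat.mul_pos i₀.pos hδ)
  constructor
  · rintro ⟨hper, huniq⟩
    refine isPerfectNecklace_iff.2 ⟨(periodic_fillSelected_iff hu.1 hS hwin hδ _).1 hper,
      fun r hr y => ?_⟩
    obtain ⟨i, -, hiL, -, rfl⟩ := exists_count_eq (p := S) (b := 0) (e := L) (by simp) hr
    obtain ⟨x, hcov, hxy⟩ := exists_covers_agreeOnSelected ha hwin hSdiam i y
    rw [← existsUnique_congr fun k : Fin (a ^ δ) =>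
        covers_fillSelected_add_mul_iff hu.1 hS hSdiam hwin hcov hxy k,
      ← existsUnique_covers_fillSelected_iff hu hSdiam hiL hcov]
    exact huniq x
  · intro hv
    refine ⟨(periodic_fillSelected_iff hu.1 hS hwin hδ _).2 (isPerfectNecklace_iff.1 hv).1,
      fun x => ?_⟩
    obtain ⟨i, hcov, -⟩ := hu.2 x
    obtain ⟨y, hxy⟩ := exists_agreeOnSelected hwin i x
    rw [existsUnique_covers_fillSelected_iff hu hSdiam i.2 hcov,
      existsUnique_congr fun k : Fin (a ^ δ) =>
        covers_fillSelected_add_mul_iff hu.1 hS hSdiam hwin hcov hxy k]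
    exact hv.existsUnique_window ha ht _ y

theorem lift_characterization_general (a n d δ : ℕ) (ha : 2 ≤ a) (hn : 0 < n)
    (u : ℕ → Option (Fin a))
    (hu : IsUpcycle a n (a ^ (n - d)) u)
    (hdiam : ∀ i, ((Finset.range n).filter (fun j => u (i + j) = none)).card = d)
    (S : ℕ → Prop) [DecidablePred S]
    (hSdiam : ∀ i, S i → u i = none)
    (hSu : ∀ i, S (i + a ^ (n - d)) ↔ S i)
    (hSδ : ∀ i, ((Finset.range n).filter (fun j => S (i + j))).card = δ)
    (v : ℕ → Fin a) :
    (IsUpcycle a n (a ^ (n - d + δ))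
        (fun i => if S i then some (v (((Finset.range i).filter S).card)) else u i) ↔
      IsPerfectNecklace a δ (δ * a ^ (n - d) / n) v) ∧
    (IsUpcycle a n (a ^ (n - d + δ))
        (fun i => if S i then some (v (((Finset.range i).filter S).card)) else u i) →
      ∀ i, ((Finset.range n).filter (fun j =>
          (if S (i + j) then some (v (((Finset.range (i + j)).filter S).card))
            else u (i + j)) = none)).card = d - δ) := by
  have hfill : (fun i => if S i then some (v (((Finset.range i).filter S).card)) else u i) =
      fillSelected S u v := by
    funext i
    simp only [fillSelected, Nat.count_eq_card_filter_range]
  have hS : Periodic S (a ^ (n - d)) := fun i => propext (hSu i)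
  have hwin : ∀ i, Nat.count S (i + n) = Nat.count S i + δ := fun i => by
    rw [Nat.count_add, Nat.count_eq_card_filter_range (fun k => S (i + k)), hSδ]
  rw [hfill]
  refine ⟨?_, fun _ i => ?_⟩
  · rw [pow_add]
    rcases Nat.eq_zero_or_pos δ with rfl | hδ
    · have hSempty : ∀ i, ¬ S i := fun i hSi => by
        have := Nat.count_strict_mono hSi (by omega : i < i + n)
        have := hwin i
        omega
      have hfill_eq : fillSelected S u v = u := funext fun i => if_neg (hSempty i)
      simpa [hfill_eq, zero_mul] using iff_of_true hu (isPerfectNecklace_zero a 0 v)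
    · have ht : δ * a ^ (n - d) / n = Nat.count S (a ^ (n - d)) :=
        Nat.div_eq_of_eq_mul_left hn (by linarith [mul_count_eq_of_periodic hS hwin])
      rw [ht, isUpcycle_fillSelected_iff (by omega) hu hS hSdiam hwin hδ]
  · have hcard := card_fillSelected_eq_none (n := n) (v := v) hSdiam i
    simp only [fillSelected, Nat.count_eq_card_filter_range] at hcard
    rw [hcard, hdiam, hSδ]

/-- Characterization of lifts: let `u` be an upcycle for `(Fin a)^n` with diamondicity
`d`, let `S` be an `n`-periodic set of diamond positions of `u` (also periodic with the
length of `u`) with `δ` selected diamonds per window, and let `w` be obtained from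
`u^(a^δ)` by replacing the copies of the selected diamonds, in increasing order of
position, with the characters of the cyclic total word `v`.  Then `w` is an upcycle
for `(Fin a)^n` if and only if `v` is an `(a, δ, δ·a^(n-d)/n)`-perfect necklace, and in
that case `w` has diamondicity `d - δ`. -/
theorem lift_characterization (a n d δ : ℕ) (ha : 2 ≤ a) (hn : 0 < n) (hd : d ≤ n)
    (hδd : δ ≤ d)
    (u : ℕ → Option (Fin a))
    (hu : IsUpcycle a n (a ^ (n - d)) u)
    (hdiam : ∀ i, ((Finset.range n).filter (fun j => u (i + j) = none)).card = d)
    (S : ℕ → Prop) [DecidablePred S]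
    (hSdiam : ∀ i, S i → u i = none)
    (hSn : ∀ i, S (i + n) ↔ S i)
    (hSu : ∀ i, S (i + a ^ (n - d)) ↔ S i)
    (hSδ : ∀ i, ((Finset.range n).filter (fun j => S (i + j))).card = δ)
    (v : ℕ → Fin a) :
    (IsUpcycle a n (a ^ (n - d + δ))
        (fun i => if S i then some (v (((Finset.range i).filter S).card)) else u i) ↔
      IsPerfectNecklace a δ (δ * a ^ (n - d) / n) v) ∧
    (IsUpcycle a n (a ^ (n - d + δ))
        (fun i => if S i then some (v (((Finset.range i).filter S).card)) else u i) →
      ∀ i, ((Finset.range n).filter (fun j =>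
          (if S (i + j) then some (v (((Finset.range (i + j)).filter S).card))
            else u (i + j)) = none)).card = d - δ) :=
  lift_characterization_general a n d δ ha hn u hu hdiam S hSdiam hSu hSδ v
end

section
/- Every upcycle for A^n lifts to a De Bruijn cycle: there exists a De Bruijn cycle w for A^n such that w is covered by the concatenation of a^d copies of u, where d is the diamondicity of u and a = |A|. -/
/-- `w`, viewed as a cyclic word of length `a ^ n`, is a De Bruijn cycle for
`(Fin a)^n`. -/
def IsDeBruijn (a n : ℕ) (w : ℕ → Fin a) : Prop :=
  (∀ i, w (i + a ^ n) = w i) ∧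
  ∀ x : Fin n → Fin a, ∃! i : Fin (a ^ n), ∀ m : Fin n, w ((i : ℕ) + (m : ℕ)) = x m

open Function Finset

section Diamonds

variable {α : Type*} (u : ℕ → Option α)

def diamondCount (i ℓ : ℕ) : ℕ :=
  ((range ℓ).filter fun j => u (i + j) = none).card

variable {u}

theorem diamondCount_add (i ℓ m : ℕ) :
    diamondCount u i (ℓ + m) = diamondCount u i ℓ + diamondCount u (i + ℓ) m := by
  simp only [diamondCount, card_filter, sum_range_add, add_assoc]

theorem diamondCount_mono (i : ℕ) : Monotone (diamondCount u i) := fun _ _ h =>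
  card_le_card (filter_subset_filter _ (range_subset_range.2 h))

theorem diamondCount_one (i : ℕ) : diamondCount u i 1 = if u i = none then 1 else 0 := by
  rw [diamondCount, card_filter, sum_range_one, add_zero]

theorem exists_diamondCount_eq {i ℓ r : ℕ} (hr : r < diamondCount u i ℓ) :
    ∃ j < ℓ, u (i + j) = none ∧ diamondCount u i j = r := by
  induction ℓ with
  | zero => simp [diamondCount] at hr
  | succ ℓ ih =>
    by_cases hlt : r < diamondCount u i ℓ
    · obtain ⟨j, hj, hnone, hcount⟩ := ih hlt
      exact ⟨j, by omega, hnone, hcount⟩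
    · have hstep := diamondCount_add (u := u) i ℓ 1
      rw [diamondCount_one] at hstep
      refine ⟨ℓ, by omega, ?_, ?_⟩
      · by_contra hsome
        rw [if_neg hsome] at hstep
        omega
      · split_ifs at hstep <;> omega

variable {N : ℕ} (hper : Periodic u N)
include hper

theorem diamondCount_add_period (i ℓ : ℕ) : diamondCount u (i + N) ℓ = diamondCount u i ℓ := by
  simp only [diamondCount, add_right_comm i N, hper _]

theorem diamondCount_period (i : ℕ) : diamondCount u i N = diamondCount u 0 N := by
  induction i with
  | zero => rfl
  | succ i ih =>
    have h := diamondCount_add (u := u) i 1 N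
    rw [add_comm 1 N, diamondCount_add, diamondCount_add_period hper] at h
    omega

theorem diamondCount_mul_period (i k : ℕ) :
    diamondCount u i (k * N) = k * diamondCount u 0 N := by
  induction k with
  | zero => simp [diamondCount]
  | succ k ih =>
    rw [Nat.succ_mul, diamondCount_add, ih, diamondCount_period hper (i + k * N), Nat.succ_mul]

theorem diamondCount_add_mul_period (t k : ℕ) :
    diamondCount u 0 (t + k * N) = diamondCount u 0 t + k * diamondCount u 0 N := by
  rw [diamondCount_add, diamondCount_mul_period hper]

theorem diamondCount_le_mul_period (hN : 0 < N) (i n : ℕ) :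
    diamondCount u i n ≤ n * diamondCount u 0 N :=
  (diamondCount_mono i (Nat.le_mul_of_pos_right n hN)).trans_eq (diamondCount_mul_period hper i n)

end Diamonds

theorem Relation.ReflTransGen.exists_rel_leaving {β : Type*} {r : β → β → Prop} {p : β → Prop}
    {a b : β} (h : Relation.ReflTransGen r a b) (ha : p a) (hb : ¬p b) :
    ∃ x y, p x ∧ ¬p y ∧ r x y := by
  induction h with
  | refl => exact absurd ha hb
  | @tail c b _ hcb ih =>
    by_cases hc : p c
    · exact ⟨c, b, hc, hb, hcb⟩
    · exact ih hc

namespace Equiv.Perm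

variable {α : Type*}

section SameCycle

variable {f : Perm α} {x y z : α}

theorem pow_apply_eq_pow_apply_of_forall_lt {g : Perm α} {k : ℕ}
    (h : ∀ i < k, g ((f ^ i) x) = f ((f ^ i) x)) : (g ^ k) x = (f ^ k) x := by
  induction k with
  | zero => rfl
  | succ k ih =>
    rw [pow_succ', pow_succ', mul_apply, mul_apply, ih fun i hi => h i (by omega),
      h k k.lt_succ_self]

variable [DecidableEq α] [Finite α]

theorem sameCycle_mul_swap_apply (hxy : ¬f.SameCycle x y) (hxz : f.SameCycle x z) :
    (f * swap x y).SameCycle (f x) z := by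
  classical
  have hex : ∃ k, (f ^ k) (f x) = z := (sameCycle_apply_left.2 hxz).exists_nat_pow_eq
  set k := Nat.find hex
  have hk : (f ^ k) (f x) = z := Nat.find_spec hex
  refine ⟨k, ?_⟩
  rw [zpow_natCast, ← hk]
  refine pow_apply_eq_pow_apply_of_forall_lt fun i hi => ?_
  rw [mul_apply, swap_apply_of_ne_of_ne]
  · intro hx
    refine Nat.find_min hex (m := k - (i + 1)) (by omega) ?_
    have hsplit : f ^ k = f ^ (k - (i + 1)) * f * f ^ i := by
      rw [← pow_succ, ← pow_add]
      congr 1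
      omega
    rw [← hk, hsplit, mul_apply, mul_apply, hx]
  · intro hy
    exact hxy (sameCycle_apply_left.1 ((sameCycle_pow_left (n := i)).1 (by rw [hy])))

theorem sameCycle_mul_swap (hxy : ¬f.SameCycle x y) (hz : f.SameCycle x z ∨ f.SameCycle y z) :
    (f * swap x y).SameCycle x z := by
  have hyx : ¬f.SameCycle y x := fun h => hxy h.symm
  have hx : (f * swap x y) x = f y := by rw [mul_apply, swap_apply_left]
  have hy : (f * swap x y) y = f x := by rw [mul_apply, swap_apply_right]
  have hxy' : (f * swap x y).SameCycle x y := by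
    have := sameCycle_mul_swap_apply hyx (SameCycle.refl f y)
    rwa [swap_comm, ← hx, sameCycle_apply_left] at this
  rcases hz with hz | hz
  · have := sameCycle_mul_swap_apply hxy hz
    rw [← hy, sameCycle_apply_left] at this
    exact hxy'.trans this
  · have := sameCycle_mul_swap_apply hyx hz
    rwa [swap_comm, ← hx, sameCycle_apply_left] at this

end SameCycle

section Orbit

variable [Fintype α] {ψ : Perm α} {e₀ : α}

theorem minimalPeriod_eq_card_of_forall_sameCycle (h : ∀ e, ψ.SameCycle e₀ e) :
    minimalPeriod ψ e₀ = Fintype.card α := by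
  classical
  have hperiodic : IsPeriodicPt ψ (orderOf ψ) e₀ := by
    rw [IsPeriodicPt, IsFixedPt, iterate_eq_pow, pow_orderOf_eq_one, one_apply]
  have hpos : 0 < minimalPeriod ψ e₀ :=
    minimalPeriod_pos_of_mem_periodicPts ⟨_, orderOf_pos ψ, hperiodic⟩
  have himage : (range (minimalPeriod ψ e₀)).image (fun n => ψ^[n] e₀) = univ := by
    refine eq_univ_of_forall fun e => ?_
    obtain ⟨n, hn⟩ := (h e).exists_nat_pow_eq
    exact mem_image.2 ⟨n % minimalPeriod ψ e₀, mem_range.2 (Nat.mod_lt _ hpos),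
      by rw [iterate_mod_minimalPeriod_eq, iterate_eq_pow, hn]⟩
  rw [← card_univ, ← himage, card_image_of_injOn, card_range]
  intro m hm n hn hmn
  exact (iterate_eq_iterate_iff_of_lt_minimalPeriod (mem_range.1 hm) (mem_range.1 hn)).1 hmn

theorem pow_apply_eq_pow_apply_iff_modEq (h : ∀ e, ψ.SameCycle e₀ e) {s t : ℕ} :
    (ψ ^ s) e₀ = (ψ ^ t) e₀ ↔ s ≡ t [MOD Fintype.card α] := by
  have hpos : 0 < Fintype.card α := Fintype.card_pos_iff.2 ⟨e₀⟩
  rw [← minimalPeriod_eq_card_of_forall_sameCycle h] at hpos ⊢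
  rw [← iterate_eq_pow, ← iterate_eq_pow, ← iterate_mod_minimalPeriod_eq,
    ← iterate_mod_minimalPeriod_eq (n := t),
    iterate_eq_iterate_iff_of_lt_minimalPeriod (Nat.mod_lt _ hpos) (Nat.mod_lt _ hpos)]
  rfl

end Orbit

end Equiv.Perm

section Euler

open Equiv Equiv.Perm

variable {E V : Type*} [Fintype E] [DecidableEq E] {src dst : E → V}

/- A successor permutation with the largest cycle through `e₀` is cyclic: otherwise some edge
leaves that cycle, and exchanging the successors of two edges with a common endpoint in different
cycles merges the cycles. -/
theorem exists_perm_forall_sameCycle_of_connected (φ : Perm E) (hφ : ∀ e, src (φ e) = dst e)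
    (hconn : ∀ e e', Relation.ReflTransGen (fun e e' => src e' = dst e) e e') (e₀ : E) :
    ∃ ψ : Perm E, (∀ e, src (ψ e) = dst e) ∧ ∀ e, ψ.SameCycle e₀ e := by
  classical
  obtain ⟨ψ, hψ, hmax⟩ := (univ.filter fun ψ : Perm E => ∀ e, src (ψ e) = dst e).exists_max_image
    (fun ψ => (univ.filter (ψ.SameCycle e₀)).card) ⟨φ, by simpa using hφ⟩
  simp only [mem_filter, mem_univ, true_and] at hψ hmax
  refine ⟨ψ, hψ, fun e => by_contra fun he => ?_⟩
  obtain ⟨x, y, hx, hy, hxy⟩ := (hconn e₀ e).exists_rel_leaving (p := ψ.SameCycle e₀) .rfl he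
  set x' := ψ.symm y
  have hx' : ¬ψ.SameCycle e₀ x' := fun h => hy (by simpa [x'] using sameCycle_apply_right.2 h)
  have hdst : dst x' = dst x := by rw [← hψ x', ψ.apply_symm_apply, hxy]
  have hxx' : ¬ψ.SameCycle x x' := fun h => hx' (hx.trans h)
  set ψ' := ψ * swap x x'
  have hψ' : ∀ e, src (ψ' e) = dst e := by
    intro e
    rw [mul_apply, hψ, swap_apply_def]
    split_ifs with h₁ h₂
    · rw [h₁, hdst]
    · rw [h₂, hdst]
    · rfl
  have hsub : univ.filter (ψ.SameCycle e₀) ⊂ univ.filter (ψ'.SameCycle e₀) := by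
    have hx₀ : ψ'.SameCycle x e₀ := sameCycle_mul_swap hxx' (.inl hx.symm)
    refine (ssubset_iff_of_subset fun z hz => ?_).2 ⟨x', ?_, ?_⟩
    · simp only [mem_filter, mem_univ, true_and] at hz ⊢
      exact hx₀.symm.trans (sameCycle_mul_swap hxx' (.inl (hx.symm.trans hz)))
    · simpa using hx₀.symm.trans (sameCycle_mul_swap hxx' (.inr .rfl))
    · simpa using hx'
  exact absurd (hmax ψ' hψ') (not_le.2 (card_lt_card hsub))

end Euler

section StridedDeBruijn

open Equiv Equiv.Perm

variable {a d M : ℕ}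

/- For `M = 1` these are the De Bruijn sequences of order `d`. -/
def IsStridedDeBruijn (a d M : ℕ) (F : ℕ → Fin a) : Prop :=
  Periodic F (a ^ d * M) ∧
    ∀ c, Injective fun k : Fin (a ^ d) => fun r : Fin d => F (c + k * M + r)

/- The edge `(c, w)` of the layered De Bruijn graph is the word `w` of length `d + 1`, lying over
the step `c → c + 1` of the cycle `ZMod M`. -/
def deBruijnSrc (e : ZMod M × (Fin (d + 1) → Fin a)) : ZMod M × (Fin d → Fin a) :=
  (e.1, Fin.init e.2)

def deBruijnDst (e : ZMod M × (Fin (d + 1) → Fin a)) : ZMod M × (Fin d → Fin a) :=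
  (e.1 + 1, Fin.tail e.2)

theorem deBruijn_reflTransGen [NeZero M] (e e' : ZMod M × (Fin (d + 1) → Fin a)) :
    Relation.ReflTransGen (fun e e' => deBruijnSrc e' = deBruijnDst e) e e' := by
  obtain ⟨c, w⟩ := e
  obtain ⟨c', w'⟩ := e'
  -- walk along the windows of a word that starts with `w` and has `w'` at `K ≡ c' - c`
  set K := d + 1 + (c' - c - (d + 1 : ℕ)).val
  let W : ℕ → Fin a := fun t =>
    if h : t < d + 1 then w ⟨t, h⟩ else w' ⟨(t - K) % (d + 1), Nat.mod_lt _ d.succ_pos⟩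
  let edge : ℕ → ZMod M × (Fin (d + 1) → Fin a) := fun i => (c + i, fun j => W (i + j))
  have hwalk (k : ℕ) : Relation.ReflTransGen (fun e e' => deBruijnSrc e' = deBruijnDst e)
      (edge 0) (edge k) := by
    induction k with
    | zero => rfl
    | succ k ih =>
      refine ih.tail (Prod.ext ?_ (funext fun j => ?_))
      · simp only [edge, deBruijnSrc, deBruijnDst]
        push_cast
        ring
      · simp only [edge, deBruijnSrc, deBruijnDst, Fin.init, Fin.tail, Fin.val_castSucc,
          Fin.val_succ]
        ring_nf
  have hstart : edge 0 = (c, w) := by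
    refine Prod.ext (by simp [edge]) (funext fun j => ?_)
    simp only [edge, W, zero_add, dif_pos j.2]
  have hend : edge K = (c', w') := by
    refine Prod.ext ?_ (funext fun j => ?_)
    · simp only [edge, K]
      push_cast
      rw [ZMod.natCast_zmod_val]
      ring
    · have hj : ¬K + j < d + 1 := by omega
      simp only [edge, W, dif_neg hj, Nat.add_sub_cancel_left, Nat.mod_eq_of_lt j.2]
  rw [← hstart, ← hend]
  exact hwalk K

theorem deBruijn_pow_apply {ψ : Perm (ZMod M × (Fin (d + 1) → Fin a))}
    (hψ : ∀ e, deBruijnSrc (ψ e) = deBruijnDst e) (e₀ : ZMod M × (Fin (d + 1) → Fin a))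
    (t : ℕ) : (ψ ^ t) e₀ = (e₀.1 + t, fun j : Fin (d + 1) => ((ψ ^ (t + (j : ℕ))) e₀).2 0) := by
  have hfst (e) : (ψ e).1 = e.1 + 1 := congrArg Prod.fst (hψ e)
  have hsnd (e) (j : Fin d) : (ψ e).2 j.castSucc = e.2 j.succ :=
    congrFun (congrArg Prod.snd (hψ e)) j
  refine Prod.ext ?_ (funext fun j => ?_)
  · induction t with
    | zero => simp
    | succ t ih =>
      rw [pow_succ', mul_apply, hfst, ih]
      push_cast
      ring
  · induction j using Fin.induction generalizing t with
    | zero => simp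
    | succ j ih =>
      rw [← hsnd, ← mul_apply, ← pow_succ', ih]
      simp only [Fin.val_castSucc, Fin.val_succ]
      ring_nf

theorem exists_isStridedDeBruijn (ha : 0 < a) (hM : d = 0 ∨ 0 < M) :
    ∃ F, IsStridedDeBruijn a d M F := by
  rcases d with _ | d
  · refine ⟨fun _ => ⟨0, ha⟩, fun _ => rfl, fun _ k k' _ => Fin.ext ?_⟩
    have hk : (k : ℕ) < 1 := k.2.trans_eq (pow_zero a)
    have hk' : (k' : ℕ) < 1 := k'.2.trans_eq (pow_zero a)
    omega
  have : NeZero M := ⟨by omega⟩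
  -- `(c, w) ↦ (c + 1, w ∘ finRotate _)`
  let rotate : Perm (ZMod M × (Fin (d + 1) → Fin a)) :=
    (Equiv.addRight 1).prodCongr ((finRotate (d + 1)).symm.arrowCongr (Equiv.refl _))
  have hrotate (e) : deBruijnSrc (rotate e) = deBruijnDst e := by
    refine Prod.ext rfl (funext fun j => ?_)
    simp [rotate, deBruijnSrc, deBruijnDst, Fin.init, Fin.tail, finRotate_apply,
      Fin.coeSucc_eq_succ]
  let e₀ : ZMod M × (Fin (d + 1) → Fin a) := (0, fun _ => ⟨0, ha⟩)
  obtain ⟨ψ, hψ, hcycle⟩ :=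
    exists_perm_forall_sameCycle_of_connected rotate hrotate deBruijn_reflTransGen e₀
  have hcard : Fintype.card (ZMod M × (Fin (d + 1) → Fin a)) = a ^ (d + 1) * M := by
    simp [ZMod.card, mul_comm]
  refine ⟨fun t => ((ψ ^ t) e₀).2 0, fun t => ?_, fun c k k' hkk' => ?_⟩
  · have h := (pow_apply_eq_pow_apply_iff_modEq hcycle (s := t + a ^ (d + 1) * M) (t := t)).2
      (by rw [hcard]; exact Nat.add_modEq_right)
    simp only [h]
  · have h : (ψ ^ (c + k * M)) e₀ = (ψ ^ (c + k' * M)) e₀ := by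
      rw [deBruijn_pow_apply hψ, deBruijn_pow_apply hψ _ (c + k' * M)]
      refine Prod.ext ?_ (funext fun r => congrFun hkk' r)
      simp
    rw [pow_apply_eq_pow_apply_iff_modEq hcycle, hcard] at h
    exact Fin.ext (((Nat.ModEq.add_left_cancel' c h).mul_right_cancel' (by omega)).eq_of_lt_of_lt
      k.2 k'.2)

end StridedDeBruijn

section Fill

variable {α : Type*} {u : ℕ → Option α} {F : ℕ → α} {N : ℕ}

def fillDiamonds (u : ℕ → Option α) (F : ℕ → α) (t : ℕ) : α :=
  (u t).getD (F (diamondCount u 0 t))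

theorem fillDiamonds_of_eq_some {t : ℕ} {x : α} (h : u t = some x) : fillDiamonds u F t = x := by
  simp [fillDiamonds, h]

theorem eq_none_or_eq_some_fillDiamonds (t : ℕ) : u t = none ∨ u t = some (fillDiamonds u F t) := by
  cases h : u t
  · exact Or.inl rfl
  · exact Or.inr (congrArg some (fillDiamonds_of_eq_some h).symm)

theorem Function.Periodic.fillDiamonds (hper : Periodic u N) {k : ℕ}
    (hF : Periodic F (k * diamondCount u 0 N)) : Periodic (fillDiamonds u F) (k * N) := by
  intro t
  have hu : u (t + k * N) = u t := by simpa using hper.nat_mul k t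
  simp only [_root_.fillDiamonds, hu, diamondCount_add_mul_period hper, hF _]

theorem fillDiamonds_add_mul_of_eq_none (hper : Periodic u N) {i j : ℕ} (h : u (i + j) = none)
    (k : ℕ) : fillDiamonds u F (i + k * N + j) =
      F (diamondCount u 0 i + k * diamondCount u 0 N + diamondCount u i j) := by
  have hshift : i + k * N + j = i + j + k * N := by ring
  have hnone : u (i + j + k * N) = none := by simpa [h] using hper.nat_mul k (i + j)
  rw [hshift, fillDiamonds, hnone, Option.getD_none, diamondCount_add_mul_period hper,
    diamondCount_add, zero_add, add_right_comm]

theorem covers_mod_fillDiamonds {a n : ℕ} {u : ℕ → Option (Fin a)} {F : ℕ → Fin a}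
    (hper : Periodic u N) (t : ℕ) :
    Covers a n u (t % N) fun m => fillDiamonds u F (t + m) := by
  intro j
  have hmod : u (t % N + j) = u (t + j) := by
    have hsplit : t % N + j + t / N * N = t + j := by
      rw [add_right_comm, Nat.mod_add_div']
    simpa [hsplit] using (hper.nat_mul (t / N) (t % N + j)).symm
  rw [hmod]
  exact eq_none_or_eq_some_fillDiamonds _

end Fill

theorem isDeBruijn_of_injective {a n : ℕ} {w : ℕ → Fin a} (hper : Periodic w (a ^ n))
    (hinj : Injective fun y : Fin (a ^ n) => fun m : Fin n => w (y + m)) : IsDeBruijn a n w := by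
  have hbij : Bijective fun y : Fin (a ^ n) => fun m : Fin n => w (y + m) :=
    (Fintype.bijective_iff_injective_and_card _).2 ⟨hinj, by simp⟩
  exact ⟨hper, fun x => by simpa only [funext_iff] using hbij.existsUnique x⟩

theorem isDeBruijn_fillDiamonds {a n d N : ℕ} {u : ℕ → Option (Fin a)} {F : ℕ → Fin a}
    (hN : a ^ d * N = a ^ n) (hu : IsUpcycle a n N u) (hdiam : ∀ i, diamondCount u i n = d)
    (hF : IsStridedDeBruijn a d (diamondCount u 0 N) F) : IsDeBruijn a n (fillDiamonds u F) := by
  obtain ⟨hper, huniq⟩ := hu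
  refine isDeBruijn_of_injective (hN ▸ Periodic.fillDiamonds hper hF.1) fun y y' hyy' => ?_
  have hN0 : 0 < N := Nat.pos_of_mul_pos_left (by rw [hN]; exact y.pos)
  have hsplit (z : Fin (a ^ n)) : (z : ℕ) % N + z / N * N = z := Nat.mod_add_div' z N
  have hquot (z : Fin (a ^ n)) : (z : ℕ) / N < a ^ d :=
    Nat.div_lt_of_lt_mul (by rw [mul_comm, hN]; exact z.2)
  have hrem : (y : ℕ) % N = y' % N := by
    have hcov := covers_mod_fillDiamonds (n := n) (F := F) hper
    refine congrArg Fin.val ((huniq _).unique (y₁ := ⟨y % N, Nat.mod_lt _ hN0⟩)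
      (y₂ := ⟨y' % N, Nat.mod_lt _ hN0⟩) (hcov y) ?_)
    simpa only [← hyy'] using hcov y'
  set i := (y : ℕ) % N
  have hwindow (z : Fin (a ^ n)) (hz : (z : ℕ) % N = i) {j : ℕ} (hnone : u (i + j) = none) :
      fillDiamonds u F (z + j) =
        F (diamondCount u 0 i + z / N * diamondCount u 0 N + diamondCount u i j) := by
    rw [← fillDiamonds_add_mul_of_eq_none (F := F) hper hnone, ← hz, hsplit]
  have hquot_eq : (⟨y / N, hquot y⟩ : Fin (a ^ d)) = ⟨y' / N, hquot y'⟩ := by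
    refine hF.2 (diamondCount u 0 i) (funext fun r => ?_)
    obtain ⟨j, hj, hnone, hr⟩ := exists_diamondCount_eq (u := u) (i := i) (ℓ := n) (r := r)
      (by rw [hdiam]; exact r.2)
    simpa only [← hr, hwindow y rfl hnone, hwindow y' hrem.symm hnone] using congrFun hyy' ⟨j, hj⟩
  apply Fin.ext
  rw [← hsplit y, ← hsplit y', ← hrem]
  exact congrArg (fun k : Fin (a ^ d) => i + k * N) hquot_eq

theorem upcycle_lifts_to_deBruijn_general (a n d : ℕ) (ha : 2 ≤ a) (hd : d ≤ n)
    (u : ℕ → Option (Fin a))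
    (hu : IsUpcycle a n (a ^ (n - d)) u)
    (hdiam : ∀ i, ((Finset.range n).filter (fun j => u (i + j) = none)).card = d) :
    ∃ w : ℕ → Fin a, IsDeBruijn a n w ∧ ∀ i, u i = none ∨ u i = some (w i) := by
  have hN : a ^ d * a ^ (n - d) = a ^ n := by rw [← pow_add, Nat.add_sub_cancel' hd]
  have hM : d = 0 ∨ 0 < diamondCount u 0 (a ^ (n - d)) := by
    have hle : d ≤ n * diamondCount u 0 (a ^ (n - d)) :=
      hdiam 0 ▸ diamondCount_le_mul_period hu.1 (pow_pos (by omega) _) 0 n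
    exact (Nat.eq_zero_or_pos _).imp_left fun h => by simpa [h] using hle
  obtain ⟨F, hF⟩ := exists_isStridedDeBruijn (a := a) (by omega) hM
  exact ⟨fillDiamonds u F, isDeBruijn_fillDiamonds hN hu hdiam hF,
    eq_none_or_eq_some_fillDiamonds⟩

/-- Every upcycle lifts to a De Bruijn cycle: if `u` is an upcycle for `(Fin a)^n` with
diamondicity `d` (length `a^(n-d)`), then there is a De Bruijn cycle `w` for
`(Fin a)^n` covered by the concatenation `u^(a^d)` (as periodic functions: at each
position `u` is a diamond or agrees with `w`). -/
theorem upcycle_lifts_to_deBruijn (a n d : ℕ) (ha : 2 ≤ a) (hn : 0 < n) (hd : d ≤ n)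
    (u : ℕ → Option (Fin a))
    (hu : IsUpcycle a n (a ^ (n - d)) u)
    (hdiam : ∀ i, ((Finset.range n).filter (fun j => u (i + j) = none)).card = d) :
    ∃ w : ℕ → Fin a, IsDeBruijn a n w ∧ ∀ i, u i = none ∨ u i = some (w i) :=
  upcycle_lifts_to_deBruijn_general a n d ha hd u hu hdiam
end
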